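/- arXiv:2006.11806 — 5 statements merged into one kernel-verified Lean document; each statement's English description precedes it below -/
import Mathlib

section
/- Let q be an indeterminate and [n]_q = 1+q+...+q^{n-1}. Then for all integers x, y, z with 1 ≤ z ≤ y ≤ x, the following identity holds in ℚ(q): [x−y]_q·[x+y−1]_q + q^{x−y}·[y−z]_q·[y+z−1]_q = [x−z]_q·[x+z−1]_q. -/
/-- The q-integer `[n]_q = 1 + q + ... + q^(n-1)` in `ℚ(q)`. -/
noncomputable def qint (n : ℕ) : RatFunc ℚ :=
  ∑ i ∈ Finset.range n, RatFunc.X ^ i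

lemma qint_mul (n : ℕ) : qint n * (RatFunc.X - 1) = RatFunc.X ^ n - 1 :=
  geom_sum_mul _ n

lemma X_sub_one_ne : (RatFunc.X - 1 : RatFunc ℚ) ≠ 0 := by
  rw [sub_ne_zero]
  intro h
  have h2 : algebraMap (Polynomial ℚ) (RatFunc ℚ) Polynomial.X
      = algebraMap (Polynomial ℚ) (RatFunc ℚ) 1 := by
    rw [map_one]; exact h
  have := RatFunc.algebraMap_injective ℚ h2
  simpa [Polynomial.coeff_one] using congrArg (Polynomial.coeff · 1) this

lemma key (a c d : ℕ) :
    qint a * qint (a + c + d) + RatFunc.X ^ a * (qint c * qint d)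
      = qint (a + c) * qint (a + d) := by
  apply mul_right_cancel₀ (pow_ne_zero 2 X_sub_one_ne)
  calc (qint a * qint (a + c + d) + RatFunc.X ^ a * (qint c * qint d)) *
        (RatFunc.X - 1) ^ 2
      = (qint a * (RatFunc.X - 1)) * (qint (a + c + d) * (RatFunc.X - 1))
          + RatFunc.X ^ a * ((qint c * (RatFunc.X - 1)) * (qint d * (RatFunc.X - 1))) := by
        ring
    _ = (RatFunc.X ^ a - 1) * (RatFunc.X ^ (a + c + d) - 1)
          + RatFunc.X ^ a * ((RatFunc.X ^ c - 1) * (RatFunc.X ^ d - 1)) := by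
        rw [qint_mul, qint_mul, qint_mul, qint_mul]
    _ = (RatFunc.X ^ (a + c) - 1) * (RatFunc.X ^ (a + d) - 1) := by
        simp only [pow_add]; ring
    _ = (qint (a + c) * (RatFunc.X - 1)) * (qint (a + d) * (RatFunc.X - 1)) := by
        rw [qint_mul, qint_mul]
    _ = qint (a + c) * qint (a + d) * (RatFunc.X - 1) ^ 2 := by ring

theorem stmt1 (x y z : ℤ) (hz : 1 ≤ z) (hzy : z ≤ y) (hyx : y ≤ x) :
    qint (x - y).toNat * qint (x + y - 1).toNat
      + RatFunc.X ^ (x - y).toNat * (qint (y - z).toNat * qint (y + z - 1).toNat)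
      = qint (x - z).toNat * qint (x + z - 1).toNat := by
  have h1 : (x + y - 1).toNat = (x - y).toNat + (y - z).toNat + (y + z - 1).toNat := by
    omega
  have h2 : (x - z).toNat = (x - y).toNat + (y - z).toNat := by omega
  have h3 : (x + z - 1).toNat = (x - y).toNat + (y + z - 1).toNat := by omega
  rw [h1, h2, h3]
  exact key _ _ _
end

section
/- Fix an indeterminate q and nonnegative integers x, u, d, e, m, n satisfying e ≤ min(u−n, d−m), m ≤ d, n ≤ u, and x ≥ 1. Writing [k] for the q²-integer [k]_{q²}, the following identity holds in ℚ(q): (q^{4x+4u+4d−4e−2m−2n} + 1)·[2d+2u]·[2x+2d+2u−2e−m−n] + q^{4d+4u}·[2x+2u−2e−2n]·[2x+2d−2e−2m] = [2x+4d+2u−2e−2m]·[2x+2d+4u−2e−2n]. -/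
noncomputable def q2int (n : ℕ) : RatFunc ℚ :=
  ∑ i ∈ Finset.range n, RatFunc.X ^ (2 * i)

lemma hc' : ((RatFunc.X : RatFunc ℚ) ^ 2 - 1) ≠ 0 := by
  have h : (Polynomial.X ^ 2 - 1 : Polynomial ℚ) ≠ 0 := by
    intro h
    have := congrArg (Polynomial.coeff · 2) h
    simp [Polynomial.coeff_one] at this
  have := RatFunc.algebraMap_ne_zero h
  simpa [map_sub, map_pow, RatFunc.algebraMap_X] using this

lemma q2int_eq (k : ℕ) :
    q2int k = (((RatFunc.X : RatFunc ℚ) ^ 2) ^ k - 1) / (RatFunc.X ^ 2 - 1) := by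
  rw [eq_div_iff hc']
  unfold q2int
  have : ∀ i, (RatFunc.X : RatFunc ℚ) ^ (2 * i) = (RatFunc.X ^ 2) ^ i := by
    intro i; rw [pow_mul]
  simp_rw [this]
  exact geom_sum_mul _ _

lemma key_s4 (x p r s : ℕ) :
    ((RatFunc.X : RatFunc ℚ) ^ (4 * x + 4 * p + 4 * r + 2 * s) + 1)
        * q2int (2 * p + 2 * r + 2 * s) * q2int (2 * x + 2 * p + 2 * r + s)
      + RatFunc.X ^ (4 * p + 4 * r + 4 * s)
        * (q2int (2 * x + 2 * r) * q2int (2 * x + 2 * p))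
      = q2int (2 * x + 4 * p + 2 * r + 2 * s)
        * q2int (2 * x + 2 * p + 4 * r + 2 * s) := by
  have h4 : (RatFunc.X : RatFunc ℚ) ^ (4 * x + 4 * p + 4 * r + 2 * s)
      = (RatFunc.X ^ 2) ^ (2 * x + 2 * p + 2 * r + s) := by
    rw [← pow_mul]; ring_nf
  have h5 : (RatFunc.X : RatFunc ℚ) ^ (4 * p + 4 * r + 4 * s)
      = (RatFunc.X ^ 2) ^ (2 * p + 2 * r + 2 * s) := by
    rw [← pow_mul]; ring_nf
  simp_rw [q2int_eq, h4, h5]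
  set Y : RatFunc ℚ := RatFunc.X ^ 2 with hY
  field_simp
  ring

theorem stmt4 (x u d e m n : ℕ) (hm : m ≤ d) (hn : n ≤ u)
    (he1 : e ≤ u - n) (he2 : e ≤ d - m) (hx : 1 ≤ x) :
    ((RatFunc.X : RatFunc ℚ) ^ (4 * x + 4 * u + 4 * d - 4 * e - 2 * m - 2 * n) + 1)
        * q2int (2 * d + 2 * u) * q2int (2 * x + 2 * d + 2 * u - 2 * e - m - n)
      + RatFunc.X ^ (4 * d + 4 * u)
        * (q2int (2 * x + 2 * u - 2 * e - 2 * n) * q2int (2 * x + 2 * d - 2 * e - 2 * m))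
      = q2int (2 * x + 4 * d + 2 * u - 2 * e - 2 * m)
        * q2int (2 * x + 2 * d + 4 * u - 2 * e - 2 * n) := by
  set p := d - m - e with hp
  set r := u - n - e with hr
  set s := m + n + 2 * e with hs
  have e1 : 4 * x + 4 * u + 4 * d - 4 * e - 2 * m - 2 * n = 4 * x + 4 * p + 4 * r + 2 * s := by omega
  have e2 : 2 * d + 2 * u = 2 * p + 2 * r + 2 * s := by omega
  have e3 : 2 * x + 2 * d + 2 * u - 2 * e - m - n = 2 * x + 2 * p + 2 * r + s := by omega
  have e4 : 4 * d + 4 * u = 4 * p + 4 * r + 4 * s := by omega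
  have e5 : 2 * x + 2 * u - 2 * e - 2 * n = 2 * x + 2 * r := by omega
  have e6 : 2 * x + 2 * d - 2 * e - 2 * m = 2 * x + 2 * p := by omega
  have e7 : 2 * x + 4 * d + 2 * u - 2 * e - 2 * m = 2 * x + 4 * p + 2 * r + 2 * s := by omega
  have e8 : 2 * x + 2 * d + 4 * u - 2 * e - 2 * n = 2 * x + 2 * p + 4 * r + 2 * s := by omega
  rw [e1, e2, e3, e4, e5, e6, e7, e8]
  exact key_s4 x p r s
end

section
/- For a finite set T of integers let Δ(T) = ∏ over unordered pairs {a,b} ⊆ T of [2·|a−b|]_{q²}, where [k]_{q²} = 1+q²+...+q^{2(k−1)}. Let S = {s₁ < s₂ < ... < s_n} be a set of n ≥ 2 integers and let α be an integer with s₁ < α < s_n and α ∉ S. Then Δ((S∖{s₁})∪{α}) · Δ(S∖{s_n}) · [2(s_n−s₁)]_{q²} = Δ(S) · Δ((S∖{s₁,s_n})∪{α}) · [2(s_n−α)]_{q²}, as an identity of polynomials in q. -/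
/-- `Δ(T) = ∏_{ {a,b} ⊆ T, a < b } [2|a-b|]_{q²}`, the product over unordered pairs of `T`. -/
noncomputable def Vdm (T : Finset ℤ) : RatFunc ℚ :=
  ∏ a ∈ T, ∏ b ∈ T.filter (fun b => a < b), q2int (2 * (b - a).toNat)

noncomputable def Pw (T : Finset ℤ) (x : ℤ) : RatFunc ℚ :=
  ∏ t ∈ T, q2int (2 * (x - t).natAbs)

lemma Vdm_insert (T : Finset ℤ) (x : ℤ) (hx : x ∉ T) :
    Vdm (insert x T) = Vdm T * Pw T x := by
  unfold Vdm Pw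
  rw [Finset.prod_insert hx]
  have h1 : ∀ a ∈ T, (∏ b ∈ (insert x T).filter (fun b => a < b), q2int (2 * (b - a).toNat))
      = (if a < x then q2int (2 * (x - a).toNat) else 1) *
        ∏ b ∈ T.filter (fun b => a < b), q2int (2 * (b - a).toNat) := by
    intro a ha
    rw [Finset.filter_insert]
    split_ifs with h
    · rw [Finset.prod_insert (by simp [hx])]
    · rw [one_mul]
  rw [Finset.prod_congr rfl h1, Finset.prod_mul_distrib]
  have h2 : ((insert x T).filter (fun b => x < b)) = T.filter (fun b => x < b) := by
    rw [Finset.filter_insert]; simp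
  rw [h2, Finset.prod_filter]
  have h3 : (∏ a ∈ T, if x < a then q2int (2 * (a - x).toNat) else 1) *
      ((∏ a ∈ T, if a < x then q2int (2 * (x - a).toNat) else 1) *
        ∏ a ∈ T, ∏ b ∈ T.filter (fun b => a < b), q2int (2 * (b - a).toNat))
      = (∏ a ∈ T, ∏ b ∈ T.filter (fun b => a < b), q2int (2 * (b - a).toNat)) *
        ∏ t ∈ T, ((if x < t then q2int (2 * (t - x).toNat) else 1) *
          (if t < x then q2int (2 * (x - t).toNat) else 1)) := by
    rw [Finset.prod_mul_distrib]; ring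
  rw [h3]
  congr 1
  apply Finset.prod_congr rfl
  intro t ht
  have hne : t ≠ x := fun h => hx (h ▸ ht)
  rcases lt_trichotomy x t with h | h | h
  · rw [if_pos h, if_neg (not_lt.2 h.le), mul_one]
    congr 2; omega
  · exact absurd h.symm hne
  · rw [if_neg (not_lt.2 h.le), if_pos h, one_mul]
    congr 2; omega

theorem stmt5 (S : Finset ℤ) (hne : S.Nonempty) (hcard : 2 ≤ S.card)
    (α : ℤ) (hα : α ∉ S)
    (h1 : S.min' hne < α) (h2 : α < S.max' hne) :
    Vdm (insert α (S.erase (S.min' hne))) * Vdm (S.erase (S.max' hne))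
        * q2int (2 * (S.max' hne - S.min' hne).toNat)
      = Vdm S * Vdm (insert α ((S.erase (S.min' hne)).erase (S.max' hne)))
        * q2int (2 * (S.max' hne - α).toNat) := by
  set m := S.min' hne with hm
  set M := S.max' hne with hM
  have hmM : m < M := lt_trans h1 h2
  have hmS : m ∈ S := S.min'_mem hne
  have hMS : M ∈ S := S.max'_mem hne
  set F := (S.erase m).erase M with hF
  have hMem : M ∈ S.erase m := Finset.mem_erase.2 ⟨ne_of_gt hmM, hMS⟩
  have hSe : S.erase m = insert M F := (Finset.insert_erase hMem).symm
  have hmem2 : m ∈ S.erase M := Finset.mem_erase.2 ⟨ne_of_lt hmM, hmS⟩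
  have hSe2 : S.erase M = insert m F := by
    rw [hF, Finset.erase_right_comm, Finset.insert_erase hmem2]
  have hS : S = insert m (S.erase m) := (Finset.insert_erase hmS).symm
  have hMF : M ∉ F := Finset.notMem_erase _ _
  have hmF : m ∉ F := fun h => Finset.notMem_erase m S (Finset.mem_of_mem_erase h)
  have hαe : α ∉ S.erase m := fun h => hα (Finset.mem_of_mem_erase h)
  have hαF : α ∉ F := fun h => hα (Finset.mem_of_mem_erase (Finset.mem_of_mem_erase h))
  have hme : m ∉ S.erase m := Finset.notMem_erase _ _
  -- expand everything
  have e1 : Vdm (insert α (S.erase m)) = Vdm F * Pw F M * (q2int (2 * (α - M).natAbs) * Pw F α) := by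
    rw [Vdm_insert _ _ hαe, hSe, Vdm_insert _ _ hMF]
    unfold Pw
    rw [Finset.prod_insert hMF]
  have e2 : Vdm (S.erase M) = Vdm F * Pw F m := by
    rw [hSe2, Vdm_insert _ _ hmF]
  have e3 : Vdm S = Vdm F * Pw F M * (q2int (2 * (m - M).natAbs) * Pw F m) := by
    rw [hS, Vdm_insert _ _ hme, hSe, Vdm_insert _ _ hMF]
    unfold Pw
    rw [Finset.prod_insert hMF]
  have e4 : Vdm (insert α F) = Vdm F * Pw F α := Vdm_insert _ _ hαF
  have e5 : q2int (2 * (M - m).toNat) = q2int (2 * (m - M).natAbs) := by congr 1; omega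
  have e6 : q2int (2 * (M - α).toNat) = q2int (2 * (α - M).natAbs) := by congr 1; omega
  rw [e1, e2, e3, e4, e5, e6]
  ring
end

section
/- For a finite set T of positive integers let B(T) = ∏ over unordered pairs {a,b} ⊆ T of [2(a+b−1)]_{q²}, where [k]_{q²} = 1+q²+...+q^{2(k−1)}. Let S = {s₁ < s₂ < ... < s_n} be a set of n ≥ 2 positive integers and let α be an integer with s₁ < α < s_n and α ∉ S. Then B((S∖{s₁})∪{α}) · B(S∖{s_n}) · [2(s_n+s₁−1)]_{q²} = B(S) · B((S∖{s₁,s_n})∪{α}) · [2(s_n+α−1)]_{q²}, as an identity of polynomials in q. -/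
/-- `B(T) = ∏_{ {a,b} ⊆ T, a < b } [2(a+b-1)]_{q²}`, the product over unordered pairs of `T`. -/
noncomputable def Bprod (T : Finset ℤ) : RatFunc ℚ :=
  ∏ a ∈ T, ∏ b ∈ T.filter (fun b => a < b), q2int (2 * (a + b - 1)).toNat

lemma q2int_sym (a b : ℤ) :
    q2int (2 * (a + b - 1)).toNat = q2int (2 * (b + a - 1)).toNat := by
  rw [add_comm a b]

lemma Bprod_insert (x : ℤ) (T : Finset ℤ) (hx : x ∉ T) :
    Bprod (insert x T) = Bprod T * ∏ t ∈ T, q2int (2 * (x + t - 1)).toNat := by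
  unfold Bprod
  rw [Finset.prod_insert hx]
  have h1 : (insert x T).filter (fun b => x < b) = T.filter (fun b => x < b) := by
    rw [Finset.filter_insert]; simp
  rw [h1]
  have h2 : ∀ a ∈ T,
      (∏ b ∈ (insert x T).filter (fun b => a < b), q2int (2 * (a + b - 1)).toNat)
      = (if a < x then q2int (2 * (x + a - 1)).toNat else 1) *
        ∏ b ∈ T.filter (fun b => a < b), q2int (2 * (a + b - 1)).toNat := by
    intro a _
    rw [Finset.filter_insert]
    split_ifs with h
    · rw [Finset.prod_insert (by simp [hx]), q2int_sym]
    · simp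
  rw [Finset.prod_congr rfl h2, Finset.prod_mul_distrib, ← Finset.prod_filter]
  have h3 : T.filter (fun a => a < x) = T.filter (fun b => ¬ x < b) := by
    apply Finset.filter_congr
    intro a ha
    have : a ≠ x := fun h => hx (h ▸ ha)
    simp only [not_lt]
    constructor <;> omega
  rw [h3, ← mul_assoc, Finset.prod_filter_mul_prod_filter_not T (fun b => x < b)
      (fun b => q2int (2 * (x + b - 1)).toNat), mul_comm]

theorem stmt6 (S : Finset ℤ) (hpos : ∀ s ∈ S, 0 < s) (hne : S.Nonempty) (hcard : 2 ≤ S.card)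
    (α : ℤ) (hα : α ∉ S)
    (h1 : S.min' hne < α) (h2 : α < S.max' hne) :
    Bprod (insert α (S.erase (S.min' hne))) * Bprod (S.erase (S.max' hne))
        * q2int (2 * (S.max' hne + S.min' hne - 1)).toNat
      = Bprod S * Bprod (insert α ((S.erase (S.min' hne)).erase (S.max' hne)))
        * q2int (2 * (S.max' hne + α - 1)).toNat := by
  set m := S.min' hne with hm_def
  set M := S.max' hne with hM_def
  have hmS : m ∈ S := S.min'_mem hne
  have hMS : M ∈ S := S.max'_mem hne
  have hmM : m < M := S.min'_lt_max'_of_card (by omega)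
  set S' := (S.erase m).erase M with hS'_def
  have hMem : M ∈ S.erase m := Finset.mem_erase.mpr ⟨hmM.ne', hMS⟩
  have hMS' : M ∉ S' := Finset.notMem_erase _ _
  have hmS' : m ∉ S' := fun h => (Finset.notMem_erase m S) (Finset.mem_of_mem_erase h)
  have hαS' : α ∉ S' := fun h => hα (Finset.mem_of_mem_erase (Finset.mem_of_mem_erase h))
  have hαMS' : α ∉ insert M S' := by
    simp only [Finset.mem_insert]
    push_neg
    exact ⟨h2.ne, hαS'⟩
  have hmMS' : m ∉ insert M S' := by
    simp only [Finset.mem_insert]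
    push_neg
    exact ⟨hmM.ne, hmS'⟩
  have e1 : S.erase m = insert M S' := (Finset.insert_erase hMem).symm
  have e2 : S = insert m (insert M S') := by
    rw [← e1, Finset.insert_erase hmS]
  have e3 : S.erase M = insert m S' := by
    rw [hS'_def, Finset.erase_right_comm]
    exact (Finset.insert_erase (Finset.mem_erase.mpr ⟨hmM.ne, hmS⟩)).symm
  rw [e1, e3]
  conv_lhs => rw [Bprod_insert α _ hαMS', Bprod_insert M _ hMS', Bprod_insert m _ hmS',
    Finset.prod_insert hMS']
  conv_rhs => rw [e2, Bprod_insert m _ hmMS', Bprod_insert M _ hMS', Bprod_insert α _ hαS',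
    Finset.prod_insert hMS']
  rw [q2int_sym α M, q2int_sym M m]
  ring
end

section
/- For a finite set S = {s₁ < s₂ < ... < s_n} of positive integers define f(S) ∈ ℚ(q) by f(S) = 2^{−n(n−1)} · q^{−Σ_{i=1}^{n}(i−1)(4s_i−2i−1)} · ∏_{1≤i<j≤n}[2(s_i+s_j−1)]_{q²}[2(s_j−s_i)]_{q²} / ∏_{i=1}^{n}[2i−2]_{q²}!, with f(∅) = 1 and f of a singleton = 1. Then for every such S with n ≥ 2 and every integer α with s₁ < α < s_n and α ∉ S, the following identity holds in ℚ(q): f(S)·f((S∖{s₁,s_n})∪{α}) = f((S∖{s₁})∪{α})·f(S∖{s_n}) + f(S∖{s₁})·f((S∖{s_n})∪{α}). -/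
/-- The q²-factorial `[k]_{q²}! = [1]_{q²}[2]_{q²}⋯[k]_{q²}`. -/
noncomputable def q2fact (k : ℕ) : RatFunc ℚ :=
  ∏ i ∈ Finset.range k, q2int (i + 1)

/-- The product formula `f(S)` for the tiling generating function of the quartered hexagon
`R¹_x(s₁,…,s_n)`, where `s₁ < s₂ < ⋯ < s_n` are the elements of `S` in increasing order. -/
noncomputable def fR1 (S : Finset ℤ) : RatFunc ℚ :=
  let n := S.card
  let l := S.sort (· ≤ ·)
  (2 : RatFunc ℚ) ^ (-(n * (n - 1) : ℤ))
    * RatFunc.X ^ (-(∑ i ∈ Finset.range n,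
        (i : ℤ) * (4 * l.getD i 0 - 2 * ((i : ℤ) + 1) - 1)))
    * ((∏ j ∈ Finset.range n, ∏ i ∈ Finset.range j,
          q2int (2 * (l.getD i 0 + l.getD j 0 - 1)).toNat
            * q2int (2 * (l.getD j 0 - l.getD i 0)).toNat)
        / ∏ i ∈ Finset.range n, q2fact (2 * i))

/-
Since `i - 1` is the number of elements of `S` below `s_i`, the exponent of `q` in
`f(S)` splits into a part depending only on `n` and `-4 ∑_{x < y} y` over pairs of `S`, so
`f(S) = κ(n) ∏_{x < y in S} w(x, y)` with `w(x, y) = q^{-4y} [2(x+y-1)]_{q²} [2(y-x)]_{q²}`.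
In the recurrence, the six products share every pair factor except those among `s₁ < α < s_n`,
and the identity reduces to `w(s₁, s_n) = w(s₁, α) + w(α, s_n)`. This holds because
`(q² - 1)² w(x, y) = φ(y) - φ(x)` telescopes, with `φ(t) = q^{4t-4} + q^{-4t}`.
-/

open Finset RatFunc

section PairProd

variable {α R : Type*} [LinearOrder α]

def pairProd [CommMonoid R] (w : α → α → R) (S : Finset α) : R :=
  ∏ y ∈ S, ∏ x ∈ S with x < y, w x y

def crossProd [CommMonoid R] (w : α → α → R) (z : α) (S : Finset α) : R :=
  (∏ x ∈ S with x < z, w x z) * ∏ y ∈ S with z < y, w z y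

section CommMonoid

variable [CommMonoid R] (w : α → α → R) {S : Finset α} {z b : α}

lemma pairProd_insert (hz : z ∉ S) :
    pairProd w (insert z S) = pairProd w S * crossProd w z S := by
  have hinner : ∀ y ∈ S, ∏ x ∈ insert z S with x < y, w x y
      = (if z < y then w z y else 1) * ∏ x ∈ S with x < y, w x y := by
    intro y _
    rw [filter_insert]
    split_ifs with h
    · exact prod_insert fun hm => hz (mem_filter.1 hm).1
    · rw [one_mul]
  rw [pairProd, prod_insert hz, filter_insert, if_neg (lt_irrefl z), prod_congr rfl hinner,
    prod_mul_distrib, ← prod_filter, pairProd, crossProd]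
  ac_rfl

lemma crossProd_insert_of_lt (hzb : z < b) (hb : b ∉ S) :
    crossProd w z (insert b S) = crossProd w z S * w z b := by
  rw [crossProd, crossProd, filter_insert, filter_insert, if_neg hzb.not_gt, if_pos hzb,
    prod_insert fun hm => hb (mem_filter.1 hm).1]
  ac_rfl

lemma crossProd_insert_of_gt (hbz : b < z) (hb : b ∉ S) :
    crossProd w z (insert b S) = crossProd w z S * w b z := by
  rw [crossProd, crossProd, filter_insert, filter_insert, if_pos hbz, if_neg hbz.not_gt,
    prod_insert fun hm => hb (mem_filter.1 hm).1]
  ac_rfl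

lemma crossProd_of_forall_lt (h : ∀ y ∈ S, z < y) : crossProd w z S = ∏ y ∈ S, w z y := by
  rw [crossProd, filter_false_of_mem fun y hy => (h y hy).not_gt, prod_empty, one_mul,
    filter_true_of_mem h]

end CommMonoid

theorem kuo_of_eq_mul_pairProd [CommRing R] (w : α → α → R) (κ : ℕ → R)
    {F : Finset α → R} (hF : ∀ S, F S = κ #S * pairProd w S) {a b c : α} (hab : a < b)
    (hbc : b < c) (hw : w a c = w a b + w b c) {T : Finset α} (ha : a ∉ T) (hb : b ∉ T)
    (hc : c ∉ T) :
    F (insert a (insert c T)) * F (insert b T)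
      = F (insert b (insert c T)) * F (insert a T)
        + F (insert c T) * F (insert b (insert a T)) := by
  have ha' : a ∉ insert c T := by simp [ha, (hab.trans hbc).ne]
  have hbc' : b ∉ insert c T := by simp [hb, hbc.ne]
  have hba' : b ∉ insert a T := by simp [hb, hab.ne']
  simp only [hF, card_insert_of_notMem, ha, hb, hc, ha', hbc', hba', pairProd_insert w,
    crossProd_insert_of_lt w (hab.trans hbc) hc, crossProd_insert_of_lt w hbc hc,
    crossProd_insert_of_gt w hab ha, not_false_eq_true]
  linear_combination κ (#T + 2) * κ (#T + 1) * (pairProd w T) ^ 2 * crossProd w a T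
    * crossProd w b T * crossProd w c T * hw

end PairProd

section SortedIndexing

variable {α M : Type*} [LinearOrder α] [CommMonoid M] (d : α)

lemma prod_range_getD_sort (g : α → M) (S : Finset α) :
    ∏ j ∈ range #S, g ((S.sort).getD j d) = ∏ x ∈ S, g x := by
  induction S using Finset.induction_on_min with
  | empty => simp
  | insert a S ha ih =>
    have haS : a ∉ S := fun h => lt_irrefl a (ha a h)
    rw [sort_insert _ (fun y hy => (ha y hy).le) haS, card_insert_of_notMem haS,
      prod_range_succ', prod_insert haS]
    simp only [List.getD_cons_succ, List.getD_cons_zero, ih]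
    ac_rfl

lemma prod_range_prod_range_getD_sort (w : α → α → M) (S : Finset α) :
    ∏ j ∈ range #S, ∏ i ∈ range j, w ((S.sort).getD i d) ((S.sort).getD j d)
      = pairProd w S := by
  induction S using Finset.induction_on_min with
  | empty => simp [pairProd]
  | insert a S ha ih =>
    have haS : a ∉ S := fun h => lt_irrefl a (ha a h)
    rw [sort_insert _ (fun y hy => (ha y hy).le) haS, card_insert_of_notMem haS,
      prod_range_succ', pairProd_insert w haS, crossProd_of_forall_lt w ha, ← ih,
      ← prod_range_getD_sort d (w a) S]
    simp only [prod_range_succ', List.getD_cons_succ, List.getD_cons_zero, prod_range_zero,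
      mul_one, prod_mul_distrib]

end SortedIndexing

lemma zpow_sum₀ {ι G₀ : Type*} [CommGroupWithZero G₀] {a : G₀} (ha : a ≠ 0) (s : Finset ι)
    (f : ι → ℤ) : a ^ (∑ i ∈ s, f i) = ∏ i ∈ s, a ^ f i := by
  classical
  induction s using Finset.induction_on with
  | empty => simp
  | insert i s hi ih => rw [sum_insert hi, prod_insert hi, zpow_add₀ ha, ih]

lemma X_sq_sub_one_ne_zero : (X ^ 2 - 1 : RatFunc ℚ) ≠ 0 := by
  rw [← map_one (algebraMap (Polynomial ℚ) (RatFunc ℚ)), ← algebraMap_X, ← map_pow, ← map_sub]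
  exact algebraMap_ne_zero (Polynomial.X_pow_sub_C_ne_zero two_pos 1)

lemma q2int_mul_X_sq_sub_one (n : ℕ) : q2int n * (X ^ 2 - 1) = X ^ (2 * n) - 1 := by
  simp_rw [q2int, pow_mul, geom_sum_mul]

lemma q2int_toNat_mul_X_sq_sub_one {m : ℤ} (hm : 0 ≤ m) :
    q2int m.toNat * (X ^ 2 - 1) = X ^ (2 * m) - 1 := by
  rw [q2int_mul_X_sq_sub_one, ← zpow_natCast]
  push_cast
  rw [Int.toNat_of_nonneg hm]

noncomputable def pairWeight (x y : ℤ) : RatFunc ℚ :=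
  X ^ (-(4 * y)) * (q2int (2 * (x + y - 1)).toNat * q2int (2 * (y - x)).toNat)

lemma X_sq_sub_one_sq_mul_pairWeight {x y : ℤ} (hx : 0 < x) (hxy : x ≤ y) :
    (X ^ 2 - 1) ^ 2 * pairWeight x y
      = (X ^ (4 * y - 4) + X ^ (-(4 * y))) - (X ^ (4 * x - 4) + X ^ (-(4 * x))) := by
  have hX : (X : RatFunc ℚ) ≠ 0 := X_ne_zero
  calc (X ^ 2 - 1) ^ 2 * pairWeight x y
      = X ^ (-(4 * y)) * ((q2int (2 * (x + y - 1)).toNat * (X ^ 2 - 1))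
          * (q2int (2 * (y - x)).toNat * (X ^ 2 - 1))) := by rw [pairWeight]; ring
    _ = X ^ (-(4 * y)) * ((X ^ (2 * (2 * (x + y - 1))) - 1) * (X ^ (2 * (2 * (y - x))) - 1)) := by
        rw [q2int_toNat_mul_X_sq_sub_one (by omega), q2int_toNat_mul_X_sq_sub_one (by omega)]
    _ = _ := by
        simp only [mul_sub, mul_add, zpow_sub₀ hX, zpow_add₀ hX, zpow_neg, zpow_mul]
        field_simp
        ring

lemma pairWeight_add {a b c : ℤ} (ha : 0 < a) (hab : a ≤ b) (hbc : b ≤ c) :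
    pairWeight a c = pairWeight a b + pairWeight b c := by
  refine mul_left_cancel₀ (pow_ne_zero 2 X_sq_sub_one_ne_zero) ?_
  rw [mul_add, X_sq_sub_one_sq_mul_pairWeight ha (hab.trans hbc),
    X_sq_sub_one_sq_mul_pairWeight ha hab, X_sq_sub_one_sq_mul_pairWeight (ha.trans_le hab) hbc]
  ring

noncomputable def fR1Scale (n : ℕ) : RatFunc ℚ :=
  2 ^ (-(n * (n - 1) : ℤ)) * X ^ (∑ i ∈ range n, (i : ℤ) * (2 * i + 3))
    / ∏ i ∈ range n, q2fact (2 * i)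

lemma fR1_eq_fR1Scale_mul_pairProd (S : Finset ℤ) :
    fR1 S = fR1Scale #S * pairProd pairWeight S := by
  set l := S.sort
  have hweights : ∏ j ∈ range #S, ∏ i ∈ range j, X ^ (-(4 * l.getD j 0))
      = (X : RatFunc ℚ) ^ (∑ j ∈ range #S, -(4 * l.getD j 0) * j) := by
    rw [zpow_sum₀ X_ne_zero]
    refine prod_congr rfl fun j _ => ?_
    rw [prod_const, card_range, zpow_mul, zpow_natCast]
  have hexp : -(∑ i ∈ range #S, (i : ℤ) * (4 * l.getD i 0 - 2 * ((i : ℤ) + 1) - 1))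
      = ∑ i ∈ range #S, (i : ℤ) * (2 * i + 3) + ∑ j ∈ range #S, -(4 * l.getD j 0) * j := by
    rw [← sum_add_distrib, ← sum_neg_distrib]
    exact sum_congr rfl fun i _ => by ring
  rw [← prod_range_prod_range_getD_sort 0 pairWeight S]
  simp only [pairWeight]
  rw [prod_congr rfl fun j _ => prod_mul_distrib, prod_mul_distrib, hweights, fR1, fR1Scale,
    hexp, zpow_add₀ X_ne_zero]
  ring

theorem stmt8_general (S : Finset ℤ) (hpos : ∀ s ∈ S, 0 < s) (hne : S.Nonempty)
    (α : ℤ) (hα : α ∉ S) (h1 : S.min' hne < α) (h2 : α < S.max' hne) :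
    fR1 S * fR1 (insert α ((S.erase (S.min' hne)).erase (S.max' hne)))
      = fR1 (insert α (S.erase (S.min' hne))) * fR1 (S.erase (S.max' hne))
        + fR1 (S.erase (S.min' hne)) * fR1 (insert α (S.erase (S.max' hne))) := by
  set a := S.min' hne
  set c := S.max' hne
  set T := (S.erase a).erase c
  have haS : a ∈ S := S.min'_mem hne
  have hcSa : c ∈ S.erase a := mem_erase.2 ⟨(h1.trans h2).ne', S.max'_mem hne⟩
  have hSa : S.erase a = insert c T := (insert_erase hcSa).symm
  have hSc : S.erase c = insert a T := by
    rw [show T = (S.erase c).erase a from erase_right_comm ..]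
    exact (insert_erase (mem_erase.2 ⟨(h1.trans h2).ne, haS⟩)).symm
  have hS : S = insert a (insert c T) := by rw [← hSa, insert_erase haS]
  have haT : a ∉ T := fun h => notMem_erase a S (mem_of_mem_erase h)
  have hcT : c ∉ T := notMem_erase c _
  have hαT : α ∉ T := fun h => hα (mem_of_mem_erase (mem_of_mem_erase h))
  rw [hSa, hSc]
  nth_rewrite 1 [hS]
  exact kuo_of_eq_mul_pairProd pairWeight fR1Scale fR1_eq_fR1Scale_mul_pairProd h1 h2
    (pairWeight_add (hpos a haS) h1.le h2.le) haT hαT hcT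

theorem stmt8 (S : Finset ℤ) (hpos : ∀ s ∈ S, 0 < s) (hne : S.Nonempty) (hcard : 2 ≤ S.card)
    (α : ℤ) (hα : α ∉ S) (h1 : S.min' hne < α) (h2 : α < S.max' hne) :
    fR1 S * fR1 (insert α ((S.erase (S.min' hne)).erase (S.max' hne)))
      = fR1 (insert α (S.erase (S.min' hne))) * fR1 (S.erase (S.max' hne))
        + fR1 (S.erase (S.min' hne)) * fR1 (insert α (S.erase (S.max' hne))) :=
  stmt8_general S hpos hne α hα h1 h2
end
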